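/- arXiv:2102.11666 — 3 statements merged into one kernel-verified Lean document; each statement's English description precedes it below -/
import Mathlib

section
/- If δ is an infinite cardinal and (A_α)_{α<δ} is an increasing sequence of subsets of 2^δ (functions δ → 2) whose union is all of 2^δ, and each A_α is closed under 'decoding along a fixed bijection δ ≃ δ × δ' in the sense that whenever a sequence s : δ → 2 lies in A_α, so does every sequence t : δ → 2 with t(β) = s(e(γ,β)) for some γ < δ (where e : δ × δ ≃ δ is a fixed bijection), then some single A_α equals all of 2^δ. Equivalently: one cannot choose, for each α < δ, an element s_α ∈ 2^δ \ A_α, since the diagonal coding of the family (s_α) would land in some A_α. -/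
/-- If `(A α)` is an increasing family of subsets of `δ → Bool` indexed by the
infinite (well-ordered) set `δ`, covering all of `2^δ`, and each `A α` is closed
under taking slices along a fixed bijection `e : δ × δ ≃ δ`, then some `A α` is
everything. -/
theorem stmt0 (δ : Type*) [Infinite δ] [LinearOrder δ]
    (e : δ × δ ≃ δ) (A : δ → Set (δ → Bool))
    (hmono : Monotone A)
    (hcover : ∀ s : δ → Bool, ∃ α, s ∈ A α)
    (hclosed : ∀ α, ∀ s ∈ A α, ∀ γ : δ, (fun β => s (e (γ, β))) ∈ A α) :
    ∃ α, A α = Set.univ := by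
  by_contra h
  push_neg at h
  have hex : ∀ α, ∃ t, t ∉ A α := by
    intro α
    rcases Set.ne_univ_iff_exists_notMem _ |>.mp (h α) with ⟨t, ht⟩
    exact ⟨t, ht⟩
  choose t ht using hex
  set s : δ → Bool := fun x => t (e.symm x).1 (e.symm x).2 with hs
  obtain ⟨α, hα⟩ := hcover s
  have := hclosed α s hα α
  have heq : (fun β => s (e (α, β))) = t α := by
    funext β; simp [hs]
  rw [heq] at this
  exact ht α this
end

section
/- If a partial order extension P ⊆ S is such that every maximal antichain of P remains maximal in S and incompatibility in P implies incompatibility in S, then any two elements of P compatible in S are compatible in P. -/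
variable {S : Type*} [PartialOrder S]

/-- Compatibility within a subset `Q` of a partial order. -/
def CompatIn (Q : Set S) (p q : S) : Prop := ∃ r ∈ Q, r ≤ p ∧ r ≤ q

/-- `A` is a maximal antichain of the suborder `Q`. -/
def MaxAntichainIn (Q : Set S) (A : Set S) : Prop :=
  A ⊆ Q ∧ (∀ p ∈ A, ∀ q ∈ A, p ≠ q → ¬ CompatIn Q p q) ∧
    ∀ p ∈ Q, ∃ a ∈ A, CompatIn Q a p

/-- If every maximal antichain of the suborder `P` remains maximal in `S` and
incompatibility in `P` implies incompatibility in `S`, then any two elements of `P`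
compatible in `S` are compatible in `P`. -/
theorem stmt10 (P : Set S)
    (hmax : ∀ A : Set S, MaxAntichainIn P A →
      ∀ p : S, ∃ a ∈ A, CompatIn (Set.univ : Set S) a p)
    (hincomp : ∀ p ∈ P, ∀ q ∈ P,
      ¬ CompatIn P p q → ¬ CompatIn (Set.univ : Set S) p q) :
    ∀ p ∈ P, ∀ q ∈ P, CompatIn (Set.univ : Set S) p q → CompatIn P p q := by
  intro p hp q hq hpq
  by_contra hnc
  -- p ≠ q since {p} compat with itself
  have hpq' : p ≠ q := by
    rintro rfl
    exact hnc ⟨p, hp, le_refl p, le_refl p⟩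
  -- set of antichains of P containing p and q
  set T : Set (Set S) := {A | A ⊆ P ∧ p ∈ A ∧ q ∈ A ∧
    ∀ a ∈ A, ∀ b ∈ A, a ≠ b → ¬ CompatIn P a b} with hT
  have hbase : ({p, q} : Set S) ∈ T := by
    refine ⟨?_, Set.mem_insert _ _, Set.mem_insert_of_mem _ rfl, ?_⟩
    · rintro x (rfl | rfl) <;> assumption
    · rintro a (rfl | rfl) b (rfl | rfl) hne h
      · exact hne rfl
      · exact hnc h
      · exact hnc ⟨h.choose, h.choose_spec.1, h.choose_spec.2.2, h.choose_spec.2.1⟩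
      · exact hne rfl
  obtain ⟨A, hsub, hAmax⟩ := zorn_subset_nonempty T (fun c hcT hchain hne => by
    refine ⟨⋃₀ c, ⟨?_, ?_, ?_, ?_⟩, fun s hs => Set.subset_sUnion_of_mem hs⟩
    · rintro x ⟨s, hs, hx⟩; exact (hcT hs).1 hx
    · obtain ⟨s, hs⟩ := hne; exact ⟨s, hs, (hcT hs).2.1⟩
    · obtain ⟨s, hs⟩ := hne; exact ⟨s, hs, (hcT hs).2.2.1⟩
    · rintro a ⟨s, hs, ha⟩ b ⟨t, ht, hb⟩ hne
      rcases hchain.total hs ht with hst | hts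
      · exact (hcT ht).2.2.2 a (hst ha) b hb hne
      · exact (hcT hs).2.2.2 a ha b (hts hb) hne) _ hbase
  have hAmem := hAmax.1
  -- A is a maximal antichain of P
  have hMA : MaxAntichainIn P A := by
    refine ⟨hAmem.1, hAmem.2.2.2, ?_⟩
    intro r hr
    by_contra hno
    push_neg at hno
    have hrA : r ∉ A := fun h => hno r h ⟨r, hr, le_refl r, le_refl r⟩
    have : insert r A ∈ T := by
      refine ⟨Set.insert_subset hr hAmem.1, Set.mem_insert_of_mem _ hAmem.2.1,
        Set.mem_insert_of_mem _ hAmem.2.2.1, ?_⟩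
      rintro a (rfl | ha) b (rfl | hb) hne h
      · exact hne rfl
      · exact hno b hb ⟨h.choose, h.choose_spec.1, h.choose_spec.2.2, h.choose_spec.2.1⟩
      · exact hno a ha h
      · exact hAmem.2.2.2 a ha b hb hne h
    have := hAmax.2 this (Set.subset_insert r A)
    exact hrA (this (Set.mem_insert r A))
  -- use hmax with the common lower bound of p, q in S
  obtain ⟨r, -, hrp, hrq⟩ := hpq
  obtain ⟨a, haA, t, -, htar, htrr⟩ := hmax A hMA r
  by_cases hap : a = p
  · subst hap
    exact hincomp a hp q hq (fun h => hnc h) ⟨t, trivial, htar, htrr.trans hrq⟩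
  · have haP : a ∈ P := hMA.1 haA
    have : ¬ CompatIn P a p := hAmem.2.2.2 a haA p hAmem.2.1 hap
    exact hincomp a haP p hp this ⟨t, trivial, htar, htrr.trans hrp⟩
end

section
/- Suppose δ is an infinite cardinal, (B_β)_{β<δ} is an increasing family of subsets of 2^δ with union 2^δ, each B_β is a proper subset of 2^δ, and each B_β is closed under slices with respect to a fixed bijection e : δ × δ ≃ δ (if s ∈ B_β then for every γ < δ the function β' ↦ s(e(γ, β')) is in B_β). Then we reach a contradiction; i.e., no such family exists. -/
/-- The diagonalization in the proof that `Slice_κ` fails for singular `κ`: there is no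
increasing family `(B β)_{β<δ}` of proper subsets of `2^δ`, each closed under slices
with respect to a fixed bijection `e : δ × δ ≃ δ`, whose union is all of `2^δ`. -/
theorem stmt13 (δ : Type*) [Infinite δ] [LinearOrder δ]
    (e : δ × δ ≃ δ) (B : δ → Set (δ → Bool))
    (hmono : Monotone B)
    (hproper : ∀ β, B β ≠ Set.univ)
    (hclosed : ∀ β, ∀ s ∈ B β, ∀ γ : δ, (fun x => s (e (γ, x))) ∈ B β)
    (hcover : ∀ s : δ → Bool, ∃ β, s ∈ B β) :
    False := by
  have hs : ∀ γ, ∃ s : δ → Bool, s ∉ B γ := by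
    intro γ
    by_contra h
    push_neg at h
    exact hproper γ (Set.eq_univ_of_forall h)
  choose s hsnot using hs
  set t : δ → Bool := fun x => s (e.symm x).1 (e.symm x).2 with ht
  obtain ⟨β, hβ⟩ := hcover t
  have := hclosed β t hβ β
  have heq : (fun x => t (e (β, x))) = s β := by
    funext x
    simp [ht]
  rw [heq] at this
  exact hsnot β this
end
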